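/- arXiv:1901.04389 — 3 statements merged into one kernel-verified Lean document; each statement's English description precedes it below -/
import Mathlib

section
/- Let α ∈ ℂ^m ⊗ ℂ^n be a nonzero vector that is not a simple tensor (i.e., there are no u ∈ ℂ^m, v ∈ ℂ^n with α = u ⊗ v), let γ ∈ ℂ^m be nonzero, and let δ be a nonzero positive semidefinite matrix on ℂ^n. Then the positive semidefinite matrix αα^* + (γγ^*) ⊗ δ on ℂ^m ⊗ ℂ^n is entangled (not separable). -/
open scoped BigOperators ComplexOrder
open Kronecker

noncomputable section

/-- The `j`-th standard basis vector of `ℂ^q` (zero if `j ≥ q`). -/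
def ee (q : ℕ) (j : ℕ) : Fin q → ℂ := fun b => if (b : ℕ) = j then 1 else 0

/-- Tensor (Kronecker) product of two vectors. -/
def tens {A B : Type*} (x : A → ℂ) (y : B → ℂ) : A × B → ℂ := fun p => x p.1 * y p.2

/-- A matrix on `ℂ^A ⊗ ℂ^B` is separable if it is a finite sum of Kronecker products of
rank-one positive semidefinite matrices. -/
def IsSep {A B : Type*} (ρ : Matrix (A × B) (A × B) ℂ) : Prop :=
  ∃ (T : ℕ) (x : Fin T → A → ℂ) (y : Fin T → B → ℂ),
    ρ = ∑ t : Fin T, Matrix.of (fun p q : A × B =>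
      (x t p.1 * (starRingEnd ℂ) (x t q.1)) * (y t p.2 * (starRingEnd ℂ) (y t q.2)))

/-- Partial trace over the middle (B) system of the rank-one projection `|Ψ⟩⟨Ψ|`. -/
def TrB {A B : Type*} [Fintype B] {k : ℕ} (Ψ : A × B × Fin k → ℂ) :
    Matrix (A × Fin k) (A × Fin k) ℂ :=
  Matrix.of fun p q => ∑ b : B, Ψ (p.1, b, p.2) * (starRingEnd ℂ) (Ψ (q.1, b, q.2))

/-- A subspace `V ⊆ ℂ^A ⊗ ℂ^B` is entanglement breaking if for every ancilla dimension
`k ≥ 1` and every `Ψ` whose slices all lie in `V`, the matrix `Tr_B |Ψ⟩⟨Ψ|` is separable. -/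
def IsEBSpace {A B : Type*} [Fintype B] (V : Submodule ℂ (A × B → ℂ)) : Prop :=
  ∀ (k : ℕ), 1 ≤ k → ∀ Ψ : A × B × Fin k → ℂ,
    (∀ ℓ : Fin k, (fun ab : A × B => Ψ (ab.1, ab.2, ℓ)) ∈ V) → IsSep (TrB Ψ)

/-- Partial transpose on the B system. -/
def PT {A B : Type*} (ρ : Matrix (A × B) (A × B) ℂ) : Matrix (A × B) (A × B) ℂ :=
  Matrix.of fun p q => ρ (p.1, q.2) (q.1, p.2)

/-- Partial trace over the B system of a matrix. -/
def trBmat {A B : Type*} [Fintype B] (ρ : Matrix (A × B) (A × B) ℂ) : Matrix A A ℂ :=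
  Matrix.of fun a a' => ∑ b : B, ρ (a, b) (a', b)

/-- Partial trace over the A system of a matrix. -/
def trAmat {A B : Type*} [Fintype A] (ρ : Matrix (A × B) (A × B) ℂ) : Matrix B B ℂ :=
  Matrix.of fun b b' => ∑ a : A, ρ (a, b) (a, b')

/-!
By the Peres criterion, separability of `ρ` forces its partial transpose to be positive
semidefinite. Take `x ⊥ γ` and `w ⊥ α^* x` (both exist because `α` has rank at least two as an
`m × n` matrix). For `z = x ⊗ w` the product term `γγ^* ⊗ δ` contributes nothing to
`PT ρ z = (α w) ⊗ (α^* x) ≠ 0`, while `⟨z, PT ρ z⟩ = ⟨x, α w⟩ ⟨w, α^* x⟩ = 0`; a positive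
semidefinite matrix cannot have a nonzero image of an isotropic vector.
-/

open Matrix

theorem exists_smul_eq_of_forall_star_dotProduct_eq_zero {𝕜 ι : Type*} [RCLike 𝕜] [Fintype ι]
    {p q : ι → 𝕜} (h : ∀ x, star p ⬝ᵥ x = 0 → star q ⬝ᵥ x = 0) : ∃ c : 𝕜, q = c • p := by
  have hq : WithLp.toLp 2 q ∈ (𝕜 ∙ WithLp.toLp 2 p)ᗮᗮ := by
    refine (Submodule.mem_orthogonal _ _).2 fun x hx => ?_
    rw [Submodule.mem_orthogonal_singleton_iff_inner_right] at hx
    rw [← inner_conj_symm, EuclideanSpace.inner_eq_star_dotProduct, dotProduct_comm,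
      h _ (by rwa [EuclideanSpace.inner_eq_star_dotProduct, dotProduct_comm] at hx), map_zero]
  rw [Submodule.orthogonal_orthogonal, Submodule.mem_span_singleton] at hq
  obtain ⟨c, hc⟩ := hq
  exact ⟨c, congrArg WithLp.ofLp hc.symm⟩

theorem exists_orthogonal_conjTranspose_mulVec_ne_zero {𝕜 A B : Type*}
    [RCLike 𝕜] [Fintype A] (M : Matrix A B 𝕜) (hM : ∀ u v, M ≠ vecMulVec u v) (γ : A → 𝕜) :
    ∃ x, star γ ⬝ᵥ x = 0 ∧ Mᴴ *ᵥ x ≠ 0 := by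
  by_contra! h
  have hcol : ∀ b, ∃ c : 𝕜, (fun a => M a b) = c • γ := fun b =>
    exists_smul_eq_of_forall_star_dotProduct_eq_zero fun x hx => congrFun (h x hx) b
  choose c hc using hcol
  refine hM γ c (Matrix.ext fun a b => ?_)
  simpa [vecMulVec_apply, mul_comm] using congrFun (hc b) a

theorem tens_ne_zero {A B : Type*} {x : A → ℂ} {y : B → ℂ} (hx : x ≠ 0) (hy : y ≠ 0) :
    tens x y ≠ 0 := by
  obtain ⟨a, ha⟩ := Function.ne_iff.1 hx
  obtain ⟨b, hb⟩ := Function.ne_iff.1 hy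
  exact Function.ne_iff.2 ⟨(a, b), mul_ne_zero ha hb⟩

theorem zero_tens {A B : Type*} (y : B → ℂ) : tens (0 : A → ℂ) y = 0 :=
  funext fun _ => zero_mul _

theorem star_tens_dotProduct_tens {A B : Type*} [Fintype A] [Fintype B]
    (x x' : A → ℂ) (y y' : B → ℂ) :
    star (tens x y) ⬝ᵥ tens x' y' = (star x ⬝ᵥ x') * (star y ⬝ᵥ y') := by
  simp only [dotProduct, tens, Fintype.sum_prod_type, Finset.sum_mul_sum, Pi.star_apply, star_mul']
  refine Finset.sum_congr rfl fun a _ => Finset.sum_congr rfl fun b _ => ?_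
  ring

theorem kronecker_mulVec_tens {A B : Type*} [Fintype A] [Fintype B]
    (X : Matrix A A ℂ) (Y : Matrix B B ℂ) (x : A → ℂ) (y : B → ℂ) :
    (X ⊗ₖ Y) *ᵥ tens x y = tens (X *ᵥ x) (Y *ᵥ y) := by
  ext ⟨a, b⟩
  simp only [mulVec, dotProduct, tens, kroneckerMap_apply, Fintype.sum_prod_type,
    Finset.sum_mul_sum]
  refine Finset.sum_congr rfl fun a' _ => Finset.sum_congr rfl fun b' _ => ?_
  ring

theorem PT_add {A B : Type*} (ρ σ : Matrix (A × B) (A × B) ℂ) : PT (ρ + σ) = PT ρ + PT σ := rfl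

theorem PT_kronecker {A B : Type*} (X : Matrix A A ℂ) (Y : Matrix B B ℂ) :
    PT (X ⊗ₖ Y) = X ⊗ₖ Yᵀ := rfl

theorem PT_vecMulVec_star_mulVec_tens {A B : Type*} [Fintype A] [Fintype B]
    (α : A × B → ℂ) (x : A → ℂ) (w : B → ℂ) :
    PT (vecMulVec α (star α)) *ᵥ tens x w
      = tens (of (Function.curry α) *ᵥ w) ((of (Function.curry α))ᴴ *ᵥ x) := by
  ext ⟨a, b⟩
  simp only [PT, mulVec, dotProduct, tens, vecMulVec_apply, of_apply, conjTranspose_apply,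
    Function.curry, Fintype.sum_prod_type, Finset.sum_mul_sum, Pi.star_apply]
  rw [Finset.sum_comm]
  refine Finset.sum_congr rfl fun b' _ => Finset.sum_congr rfl fun a' _ => ?_
  ring

theorem IsSep.posSemidef_PT {A B : Type*} [Fintype A] [Fintype B] {ρ : Matrix (A × B) (A × B) ℂ}
    (hρ : IsSep ρ) : (PT ρ).PosSemidef := by
  obtain ⟨T, x, y, rfl⟩ := hρ
  have : PT (∑ t : Fin T, of fun p q : A × B =>
      (x t p.1 * (starRingEnd ℂ) (x t q.1)) * (y t p.2 * (starRingEnd ℂ) (y t q.2)))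
      = ∑ t, vecMulVec (tens (x t) (star (y t))) (star (tens (x t) (star (y t)))) := by
    ext P Q
    simp only [PT, of_apply, Matrix.sum_apply, vecMulVec_apply, tens, Pi.star_apply, star_mul',
      RCLike.star_def, Complex.conj_conj]
    exact Finset.sum_congr rfl fun t _ => by ring
  rw [this]
  exact posSemidef_sum _ fun t _ => posSemidef_vecMulVec_self_star _

theorem entangled_pure_plus_product_general {m n : ℕ}
    (α : Fin m × Fin n → ℂ)
    (hent : ¬ ∃ (u : Fin m → ℂ) (v : Fin n → ℂ), α = tens u v)
    (γ : Fin m → ℂ)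
    (δ : Matrix (Fin n) (Fin n) ℂ) :
    ¬ IsSep (Matrix.of (fun p q : Fin m × Fin n =>
      α p * (starRingEnd ℂ) (α q) + γ p.1 * (starRingEnd ℂ) (γ q.1) * δ p.2 q.2)) := by
  intro (hsep : IsSep (vecMulVec α (star α) + vecMulVec γ (star γ) ⊗ₖ δ))
  set M := of (Function.curry α)
  have hM : ∀ u v, M ≠ vecMulVec u v := fun u v h =>
    hent ⟨u, v, funext fun ⟨a, b⟩ => congrFun (congrFun h a) b⟩
  have hMH : ∀ u v, Mᴴ ≠ vecMulVec u v := fun u v h =>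
    hM (star v) (star u) (by rw [← conjTranspose_conjTranspose M, h, conjTranspose_vecMulVec])
  obtain ⟨x, hγx, hp⟩ := exists_orthogonal_conjTranspose_mulVec_ne_zero M hM γ
  obtain ⟨w, hpw, hMw⟩ := exists_orthogonal_conjTranspose_mulVec_ne_zero Mᴴ hMH (Mᴴ *ᵥ x)
  rw [conjTranspose_conjTranspose] at hMw
  have hPT : PT (vecMulVec α (star α) + vecMulVec γ (star γ) ⊗ₖ δ) *ᵥ tens x w
      = tens (M *ᵥ w) (Mᴴ *ᵥ x) := by
    rw [PT_add, add_mulVec, PT_vecMulVec_star_mulVec_tens, PT_kronecker, kronecker_mulVec_tens,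
      vecMulVec_mulVec, hγx, MulOpposite.op_zero, zero_smul, zero_tens, add_zero]
  have hker := (hsep.posSemidef_PT.dotProduct_mulVec_zero_iff (tens x w)).1
  rw [hPT, star_tens_dotProduct_tens, star_dotProduct w, hpw, star_zero, mul_zero] at hker
  exact tens_ne_zero hMw hp (hker rfl)

/-- If `α` is an entangled pure state and `γγ^* ⊗ δ` a nonzero product positive matrix,
then `αα^* + γγ^* ⊗ δ` is entangled. -/
theorem entangled_pure_plus_product {m n : ℕ}
    (α : Fin m × Fin n → ℂ) (hα : α ≠ 0)
    (hent : ¬ ∃ (u : Fin m → ℂ) (v : Fin n → ℂ), α = tens u v)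
    (γ : Fin m → ℂ) (hγ : γ ≠ 0)
    (δ : Matrix (Fin n) (Fin n) ℂ) (hδ : δ.PosSemidef) (hδ0 : δ ≠ 0) :
    ¬ IsSep (Matrix.of (fun p q : Fin m × Fin n =>
      α p * (starRingEnd ℂ) (α q) + γ p.1 * (starRingEnd ℂ) (γ q.1) * δ p.2 q.2)) :=
  entangled_pure_plus_product_general α hent γ δ
end
end

section
/- Every entanglement-breaking subspace V ⊆ ℂ^m ⊗ ℂ^n has dimension at most n. -/
open scoped BigOperators ComplexOrder
open Kronecker

noncomputable section

/-! Take a basis `v₁, …, v_k` of `V` and `Ψ(a, b, ℓ) = v_ℓ(a, b)`. Then `ρ = Tr_B |Ψ⟩⟨Ψ|` equals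
`W W*` for a matrix `W` with `n` columns, so `rank ρ ≤ n`, while `Tr_A ρ` is the Gram matrix of
the `v_ℓ` and has rank `k`. If `ρ = ∑ₜ (xₜ ⊗ yₜ)(xₜ ⊗ yₜ)*` is separable, the range of
`Tr_A ρ = ∑ₜ ‖xₜ‖² yₜ yₜ*` is spanned by the `yₜ` with `xₜ ≠ 0`, and product vectors `xₜ ⊗ yₜ`
with `xₜ ≠ 0` and independent `yₜ` are independent, so `rank Tr_A ρ ≤ rank ρ`. Hence `k ≤ n`. -/

open Matrix Module Submodule

section ProductVectors

variable {A B ι : Type*}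

theorem linearIndependent_tens (x : ι → A → ℂ) (y : ι → B → ℂ) (hx : ∀ i, x i ≠ 0)
    (hy : LinearIndependent ℂ y) : LinearIndependent ℂ fun i => tens (x i) (y i) := by
  rw [linearIndependent_iff']
  intro s g hg i hi
  obtain ⟨a, ha⟩ : ∃ a, x i a ≠ 0 := Function.ne_iff.mp (hx i)
  have hslice : ∑ j ∈ s, (g j * x j a) • y j = 0 := by
    funext b
    simpa [Finset.sum_apply, tens, mul_assoc] using congrFun hg (a, b)
  exact (mul_eq_zero.mp (linearIndependent_iff'.mp hy s _ hslice i hi)).resolve_right ha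

theorem finrank_span_smul_le_finrank_span_tens [Finite ι] (x : ι → A → ℂ) (y : ι → B → ℂ)
    (c : ι → ℂ) (hc : ∀ i, x i = 0 → c i = 0) :
    finrank ℂ (span ℂ (Set.range fun i => c i • y i)) ≤
      finrank ℂ (span ℂ (Set.range fun i => tens (x i) (y i))) := by
  obtain ⟨κ, a, ha, hspan, hli⟩ := exists_linearIndependent' ℂ fun i => c i • y i
  have : Finite κ := Finite.of_injective a ha
  have : Fintype κ := Fintype.ofFinite κ
  have hx : ∀ j, x (a j) ≠ 0 := fun j hxj => hli.ne_zero j (by simp [hc _ hxj])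
  have hli' := linearIndependent_tens (x ∘ a) _ hx hli
  have := FiniteDimensional.span_of_finite ℂ (Set.finite_range fun i => tens (x i) (y i))
  rw [← hspan, finrank_span_eq_card hli, ← finrank_span_eq_card hli']
  refine Submodule.finrank_mono (span_le.mpr ?_)
  rintro _ ⟨j, rfl⟩
  have hsmul : tens (x (a j)) (c (a j) • y (a j)) = c (a j) • tens (x (a j)) (y (a j)) := by
    funext p
    simp only [tens, Pi.smul_apply, smul_eq_mul]
    ring
  simp only [Function.comp_apply, hsmul]
  exact smul_mem _ _ (subset_span ⟨a j, rfl⟩)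

end ProductVectors

theorem IsSep.rank_trAmat_le {A B : Type*} [Fintype A] [Fintype B]
    {ρ : Matrix (A × B) (A × B) ℂ} (h : IsSep ρ) : (trAmat ρ).rank ≤ ρ.rank := by
  obtain ⟨T, x, y, hρ⟩ := h
  let Z : Matrix (A × B) (Fin T) ℂ := of fun p t => tens (x t) (y t) p
  let c : Fin T → ℂ := fun t => ∑ a, x t a * starRingEnd ℂ (x t a)
  have hZ : ρ = Z * Zᴴ := by
    ext p q
    simp only [hρ, Matrix.sum_apply, of_apply, tens, mul_apply, conjTranspose_apply, star_mul',
      RCLike.star_def, Z]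
    exact Fintype.sum_congr _ _ fun t => by ring
  have htr : trAmat ρ = (of fun b t => (c t • y t) b) * (of fun b t => y t b)ᴴ := by
    ext b b'
    simp only [hρ, trAmat, Matrix.sum_apply, of_apply, Pi.smul_apply, smul_eq_mul,
      Finset.sum_mul, mul_apply, conjTranspose_apply, RCLike.star_def, c]
    rw [Finset.sum_comm]
    exact Fintype.sum_congr _ _ fun t => Fintype.sum_congr _ _ fun a => by ring
  calc (trAmat ρ).rank ≤ (of fun b t => (c t • y t) b).rank := by
        rw [htr]; exact rank_mul_le_left _ _
    _ = finrank ℂ (span ℂ (Set.range fun t => c t • y t)) := rank_eq_finrank_span_cols _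
    _ ≤ finrank ℂ (span ℂ (Set.range fun t => tens (x t) (y t))) :=
        finrank_span_smul_le_finrank_span_tens x y c fun t ht => by simp [c, ht]
    _ = Z.rank := (rank_eq_finrank_span_cols Z).symm
    _ = ρ.rank := by rw [hZ, rank_self_mul_conjTranspose]

section PartialTrace

variable {A B : Type*} [Fintype B] {k : ℕ}

theorem TrB_eq_mul_conjTranspose (Ψ : A × B × Fin k → ℂ) :
    TrB Ψ = (of fun p b => Ψ (p.1, b, p.2)) * (of fun p b => Ψ (p.1, b, p.2))ᴴ := by
  ext p q
  simp [TrB, mul_apply]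

theorem rank_TrB_le [Fintype A] (Ψ : A × B × Fin k → ℂ) : (TrB Ψ).rank ≤ Fintype.card B := by
  rw [TrB_eq_mul_conjTranspose]
  exact (rank_mul_le_left _ _).trans (rank_le_card_width _)

theorem trAmat_TrB [Fintype A] (Ψ : A × B × Fin k → ℂ) :
    trAmat (TrB Ψ) = (of fun ℓ (p : A × B) => Ψ (p.1, p.2, ℓ)) *
      (of fun ℓ (p : A × B) => Ψ (p.1, p.2, ℓ))ᴴ := by
  ext ℓ ℓ'
  simp [trAmat, TrB, mul_apply, Fintype.sum_prod_type]

theorem rank_trAmat_TrB [Fintype A] (Ψ : A × B × Fin k → ℂ)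
    (h : LinearIndependent ℂ fun ℓ (p : A × B) => Ψ (p.1, p.2, ℓ)) :
    (trAmat (TrB Ψ)).rank = k := by
  rw [trAmat_TrB, rank_self_mul_conjTranspose]
  simpa using LinearIndependent.rank_matrix (M := of fun ℓ (p : A × B) => Ψ (p.1, p.2, ℓ)) h

end PartialTrace

/-- Every EB subspace of `ℂ^m ⊗ ℂ^n` has dimension at most `n`. -/
theorem eb_dim_le {m n : ℕ} (V : Submodule ℂ (Fin m × Fin n → ℂ))
    (hV : IsEBSpace V) : Module.finrank ℂ V ≤ n := by
  obtain hk | hk := Nat.eq_zero_or_pos (finrank ℂ V)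
  · omega
  let v := Module.finBasis ℂ V
  let Ψ : Fin m × Fin n × Fin (finrank ℂ V) → ℂ := fun p =>
    (v p.2.2 : Fin m × Fin n → ℂ) (p.1, p.2.1)
  have hli : LinearIndependent ℂ fun ℓ (p : Fin m × Fin n) => Ψ (p.1, p.2, ℓ) :=
    v.linearIndependent.map' V.subtype V.ker_subtype
  calc finrank ℂ V = (trAmat (TrB Ψ)).rank := (rank_trAmat_TrB Ψ hli).symm
    _ ≤ (TrB Ψ).rank := (hV _ hk Ψ fun ℓ => (v ℓ).2).rank_trAmat_le
    _ ≤ n := by simpa using rank_TrB_le Ψ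
end
end

section
/- Let V_1, …, V_r be entanglement-breaking spaces with V_j ⊆ ℂ^{m_j} ⊗ ℂ^{n_j} for j = 1,…,r. Define V_1 ⊠ ⋯ ⊠ V_r ⊆ ℂ^{m_1⋯m_r} ⊗ ℂ^{n_1⋯n_r} as the span of the vectors ((a_1,…,a_r),(b_1,…,b_r)) ↦ ∏_{j=1}^r v_j(a_j,b_j) with v_j ∈ V_j (the tensor product of the V_j with all A-systems grouped together and all B-systems grouped together). Then V_1 ⊠ ⋯ ⊠ V_r is an entanglement-breaking space. -/
open scoped BigOperators ComplexOrder
open Kronecker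

noncomputable section

/-! By induction on `r` (splitting off the first factor with `Fin.consEquiv`) it suffices to
treat two factors `V ⊠ W`. Given `Ψ` with slices in `V ⊠ W`, view it as a vector on `A₁ B₁` with
ancilla `A₂ B₂ K`; its slices lie in `V`, so `Tr_{B₁} = ∑ₜ xₜxₜ* ⊗ zₜzₜ*`. If `P` is any projection
onto the span `S` of the vectors `Ψ(a₁, b₁, ·)`, conjugating by `1 ⊗ P` fixes the left side, so
`zₜ` may be replaced by `P zₜ ∈ S`. Elements of `S` have their `A₂ B₂`-slices in `W`, hence each
`Tr_{B₂} |P zₜ⟩⟨P zₜ|` is separable, and tracing out `B₂` gives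
`Tr_B |Ψ⟩⟨Ψ| = ∑ₜ xₜxₜ* ⊗ Tr_{B₂} |P zₜ⟩⟨P zₜ|`. -/

open Matrix

section Separable

variable {ι A B : Type*}

def ketBra (v : ι → ℂ) : Matrix ι ι ℂ := vecMulVec v (star v)

lemma ketBra_tens (x : A → ℂ) (y : B → ℂ) :
    ketBra (tens x y) = Matrix.of fun p q : A × B =>
      (x p.1 * (starRingEnd ℂ) (x q.1)) * (y p.2 * (starRingEnd ℂ) (y q.2)) := by
  ext p q
  simp only [ketBra, tens, vecMulVec_apply, Pi.star_apply, star_mul', of_apply]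
  exact mul_mul_mul_comm _ _ _ _

lemma mul_ketBra_mul_conjTranspose [Fintype ι] (M : Matrix ι ι ℂ) (v : ι → ℂ) :
    M * ketBra v * Mᴴ = ketBra (M *ᵥ v) := by
  rw [ketBra, mul_vecMulVec, vecMulVec_mul, ← star_mulVec, ketBra]

lemma isSep_iff (ρ : Matrix (A × B) (A × B) ℂ) :
    IsSep ρ ↔ ∃ (T : ℕ) (x : Fin T → A → ℂ) (y : Fin T → B → ℂ),
      ρ = ∑ t, ketBra (tens (x t) (y t)) := by
  simp only [ketBra_tens, IsSep]

lemma isSep_ketBra_tens (x : A → ℂ) (y : B → ℂ) : IsSep (ketBra (tens x y)) :=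
  (isSep_iff _).2 ⟨1, fun _ => x, fun _ => y, by simp⟩

lemma IsSep.zero : IsSep (0 : Matrix (A × B) (A × B) ℂ) :=
  (isSep_iff _).2 ⟨0, Fin.elim0, Fin.elim0, by simp⟩

lemma IsSep.add {ρ σ : Matrix (A × B) (A × B) ℂ} (hρ : IsSep ρ) (hσ : IsSep σ) :
    IsSep (ρ + σ) := by
  obtain ⟨T, x, y, rfl⟩ := (isSep_iff ρ).1 hρ
  obtain ⟨T', x', y', rfl⟩ := (isSep_iff σ).1 hσ
  exact (isSep_iff _).2 ⟨T + T', Fin.append x x', Fin.append y y', by simp [Fin.sum_univ_add]⟩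

lemma IsSep.sum {ρ : ι → Matrix (A × B) (A × B) ℂ} (s : Finset ι) (h : ∀ i ∈ s, IsSep (ρ i)) :
    IsSep (∑ i ∈ s, ρ i) :=
  Finset.sum_induction _ IsSep (fun _ _ => IsSep.add) IsSep.zero h

lemma IsSep.submatrix_prodMap {A' B' : Type*} {ρ : Matrix (A × B) (A × B) ℂ} (hρ : IsSep ρ)
    (f : A' → A) (g : B' → B) : IsSep (ρ.submatrix (Prod.map f g) (Prod.map f g)) := by
  obtain ⟨T, x, y, rfl⟩ := (isSep_iff ρ).1 hρ
  refine (isSep_iff _).2 ⟨T, fun t => x t ∘ f, fun t => y t ∘ g, ?_⟩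
  ext p q
  simp only [submatrix_apply, Matrix.sum_apply]
  rfl

lemma IsSep.ketBra_kronecker {C : Type*} {σ : Matrix (B × C) (B × C) ℂ} (hσ : IsSep σ)
    (x : A → ℂ) :
    IsSep ((ketBra x ⊗ₖ σ).submatrix (Equiv.prodAssoc A B C) (Equiv.prodAssoc A B C)) := by
  obtain ⟨T, u, y, rfl⟩ := (isSep_iff σ).1 hσ
  refine (isSep_iff _).2 ⟨T, fun t => tens x (u t), y, ?_⟩
  ext p q
  simp only [submatrix_apply, kroneckerMap_apply, Matrix.sum_apply, Finset.mul_sum, ketBra, tens,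
    vecMulVec_apply, Pi.star_apply, star_mul', Equiv.prodAssoc_apply]
  exact Finset.sum_congr rfl fun _ _ => by ring

end Separable

section PartialTrace

variable {A B K A' B' K' : Type*} [Fintype B]

def partialTraceB (Φ : A × B × K → ℂ) : Matrix (A × K) (A × K) ℂ :=
  ∑ b, ketBra fun p => Φ (p.1, b, p.2)

lemma TrB_eq_partialTraceB {k : ℕ} (Ψ : A × B × Fin k → ℂ) : TrB Ψ = partialTraceB Ψ := by
  ext p q
  simp only [TrB, partialTraceB, of_apply, Matrix.sum_apply]
  rfl

lemma partialTraceB_comp [Fintype B'] (Φ : A × B × K → ℂ) (f : A' → A) (e : B' ≃ B)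
    (g : K' → K) :
    partialTraceB (fun q : A' × B' × K' => Φ (f q.1, e q.2.1, g q.2.2)) =
      (partialTraceB Φ).submatrix (Prod.map f g) (Prod.map f g) := by
  ext p q
  simp only [partialTraceB, submatrix_apply, Matrix.sum_apply]
  exact e.sum_comp fun b => ketBra (fun p => Φ (p.1, b, p.2)) (Prod.map f g p) (Prod.map f g q)

lemma one_kronecker_mulVec_apply {R : Type*} [Semiring R] [Fintype A] [DecidableEq A]
    [Fintype K] (P : Matrix K K R) (v : A × K → R) (a : A) (w : K) :
    ((1 ⊗ₖ P) *ᵥ v) (a, w) = (P *ᵥ fun w' => v (a, w')) w := by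
  simp [mulVec, dotProduct, kroneckerMap_apply, one_apply, Fintype.sum_prod_type, ite_mul]

lemma partialTraceB_eq_sum_ketBra_mulVec [Fintype A] [DecidableEq A] [Fintype K]
    {Φ : A × B × K → ℂ} {P : Matrix K K ℂ}
    (hP : ∀ a b, (P *ᵥ fun w => Φ (a, b, w)) = fun w => Φ (a, b, w))
    {T : ℕ} {x : Fin T → A → ℂ} {z : Fin T → K → ℂ}
    (h : partialTraceB Φ = ∑ t, ketBra (tens (x t) (z t))) :
    partialTraceB Φ = ∑ t, ketBra (tens (x t) (P *ᵥ z t)) := by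
  set Q : Matrix (A × K) (A × K) ℂ := 1 ⊗ₖ P
  have hQΦ : ∀ b, (Q *ᵥ fun p => Φ (p.1, b, p.2)) = fun p => Φ (p.1, b, p.2) :=
    fun b => funext fun p => by rw [one_kronecker_mulVec_apply, hP]
  have hQtens : ∀ t, Q *ᵥ tens (x t) (z t) = tens (x t) (P *ᵥ z t) :=
    fun t => funext fun ⟨a, w⟩ => by
      rw [one_kronecker_mulVec_apply]
      simp [tens, mulVec, dotProduct, Finset.mul_sum, mul_left_comm]
  calc partialTraceB Φ = Q * partialTraceB Φ * Qᴴ := by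
        simp only [partialTraceB, Finset.mul_sum, Finset.sum_mul, mul_ketBra_mul_conjTranspose, hQΦ]
    _ = ∑ t, ketBra (tens (x t) (P *ᵥ z t)) := by
        rw [h]
        simp only [Finset.mul_sum, Finset.sum_mul, mul_ketBra_mul_conjTranspose, hQtens]

end PartialTrace

section EBSpace

variable {A B A' B' : Type*} [Fintype B]

lemma IsEBSpace.isSep_partialTraceB {V : Submodule ℂ (A × B → ℂ)} (hV : IsEBSpace V)
    {K : Type*} [Fintype K] (Φ : A × B × K → ℂ)
    (hΦ : ∀ ℓ, (fun ab : A × B => Φ (ab.1, ab.2, ℓ)) ∈ V) : IsSep (partialTraceB Φ) := by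
  cases isEmpty_or_nonempty K
  · rw [Subsingleton.elim (partialTraceB Φ) 0]
    exact IsSep.zero
  · set e := Fintype.equivFin K
    have h := hV (Fintype.card K) Fintype.card_pos (fun q => Φ (q.1, q.2.1, e.symm q.2.2))
      fun i => hΦ (e.symm i)
    rw [TrB_eq_partialTraceB] at h
    have := h.submatrix_prodMap id e
    rw [← partialTraceB_comp _ id (Equiv.refl B) e] at this
    simpa using this

lemma IsEBSpace.mono {V W : Submodule ℂ (A × B → ℂ)} (hV : IsEBSpace V) (hWV : W ≤ V) :
    IsEBSpace W :=
  fun k hk Ψ hΨ => hV k hk Ψ fun ℓ => hWV (hΨ ℓ)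

lemma IsEBSpace.comap_prodMap [Fintype B'] {V : Submodule ℂ (A × B → ℂ)} (hV : IsEBSpace V)
    (eA : A ≃ A') (eB : B ≃ B') :
    IsEBSpace (V.comap (LinearMap.funLeft ℂ ℂ (Prod.map eA eB))) := by
  intro k hk Ψ hΨ
  have := (hV.isSep_partialTraceB (fun q => Ψ (eA q.1, eB q.2.1, q.2.2)) hΨ).submatrix_prodMap
    eA.symm id
  rw [← partialTraceB_comp _ eA.symm eB.symm id] at this
  simpa [TrB_eq_partialTraceB] using this

lemma IsEBSpace.of_unique [Unique A] (V : Submodule ℂ (A × B → ℂ)) : IsEBSpace V := by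
  intro k _ Ψ _
  have hΨ : partialTraceB Ψ = ∑ b, ketBra (tens (fun _ => 1) fun ℓ => Ψ (default, b, ℓ)) := by
    refine Finset.sum_congr rfl fun b _ => congrArg ketBra (funext fun p => ?_)
    simp [tens, Unique.eq_default p.1]
  rw [TrB_eq_partialTraceB, hΨ]
  exact IsSep.sum _ fun b _ => isSep_ketBra_tens _ _

end EBSpace

section BoxTensor

variable {A₁ B₁ A₂ B₂ K : Type*}

def boxTensor (V : Submodule ℂ (A₁ × B₁ → ℂ)) (W : Submodule ℂ (A₂ × B₂ → ℂ)) :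
    Submodule ℂ ((A₁ × A₂) × (B₁ × B₂) → ℂ) :=
  Submodule.span ℂ {u | ∃ v ∈ V, ∃ w ∈ W, u = fun p => v (p.1.1, p.2.1) * w (p.1.2, p.2.2)}

variable {V : Submodule ℂ (A₁ × B₁ → ℂ)} {W : Submodule ℂ (A₂ × B₂ → ℂ)}

lemma boxTensor_le_comap_left (a₂ : A₂) (b₂ : B₂) :
    boxTensor V W ≤
      V.comap (LinearMap.funLeft ℂ ℂ fun ab : A₁ × B₁ => ((ab.1, a₂), (ab.2, b₂))) := by
  refine Submodule.span_le.2 ?_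
  rintro _ ⟨v, hv, w, -, rfl⟩
  show (fun ab : A₁ × B₁ => v (ab.1, ab.2) * w (a₂, b₂)) ∈ V
  convert V.smul_mem (w (a₂, b₂)) hv using 1
  funext ab
  simp [mul_comm]

lemma boxTensor_le_comap_right (a₁ : A₁) (b₁ : B₁) :
    boxTensor V W ≤
      W.comap (LinearMap.funLeft ℂ ℂ fun ab : A₂ × B₂ => ((a₁, ab.1), (b₁, ab.2))) := by
  refine Submodule.span_le.2 ?_
  rintro _ ⟨v, -, w, hw, rfl⟩
  show (fun ab : A₂ × B₂ => v (a₁, b₁) * w (ab.1, ab.2)) ∈ W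
  exact W.smul_mem (v (a₁, b₁)) hw

def regroup (Ψ : (A₁ × A₂) × (B₁ × B₂) × K → ℂ) : A₁ × B₁ × (A₂ × B₂ × K) → ℂ :=
  fun q => Ψ ((q.1, q.2.2.1), (q.2.1, q.2.2.2.1), q.2.2.2.2)

lemma partialTraceB_eq_sum_of_partialTraceB_regroup [Fintype B₁] [Fintype B₂]
    (Ψ : (A₁ × A₂) × (B₁ × B₂) × K → ℂ) {T : ℕ} (x : Fin T → A₁ → ℂ)
    (z : Fin T → A₂ × B₂ × K → ℂ) (h : partialTraceB (regroup Ψ) = ∑ t, ketBra (tens (x t) (z t))) :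
    partialTraceB Ψ = ∑ t, (ketBra (x t) ⊗ₖ partialTraceB (z t)).submatrix
      (Equiv.prodAssoc A₁ A₂ K) (Equiv.prodAssoc A₁ A₂ K) := by
  ext ⟨⟨a₁, a₂⟩, ℓ⟩ ⟨⟨a₁', a₂'⟩, ℓ'⟩
  have hb := fun b₂ => congr_fun₂ h (a₁, a₂, b₂, ℓ) (a₁', a₂', b₂, ℓ')
  simp only [partialTraceB, regroup, Matrix.sum_apply, ketBra, vecMulVec_apply, tens,
    Pi.star_apply] at hb
  simp only [partialTraceB, Matrix.sum_apply, ketBra, vecMulVec_apply, submatrix_apply,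
    kroneckerMap_apply, Equiv.prodAssoc_apply, Fintype.sum_prod_type, Pi.star_apply,
    Finset.mul_sum]
  rw [Finset.sum_comm]
  simp only [hb]
  rw [Finset.sum_comm]
  exact Finset.sum_congr rfl fun _ _ => Finset.sum_congr rfl fun _ _ => by
    simp only [star_mul']
    ring

theorem IsEBSpace.boxTensor [Fintype A₁] [Fintype B₁] [Fintype A₂] [Fintype B₂]
    (hV : IsEBSpace V) (hW : IsEBSpace W) : IsEBSpace (boxTensor V W) := by
  classical
  intro k _ Ψ hΨ
  set Φ := regroup Ψ
  obtain ⟨T, x, z, hxz⟩ := (isSep_iff _).1 <| hV.isSep_partialTraceB Φ fun w =>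
    boxTensor_le_comap_left w.1 w.2.1 (hΨ w.2.2)
  set S := Submodule.span ℂ (Set.range fun ab : A₁ × B₁ => fun w => Φ (ab.1, ab.2, w))
  obtain ⟨S', hS'⟩ := S.exists_isCompl
  set P := LinearMap.toMatrix' (S.projection S' hS')
  have hPΦ : ∀ a b, (P *ᵥ fun w => Φ (a, b, w)) = fun w => Φ (a, b, w) := fun a b => by
    rw [LinearMap.toMatrix'_mulVec]
    exact Submodule.projection_apply_of_mem_left hS' (Submodule.subset_span ⟨(a, b), rfl⟩)
  have hSW (ℓ : Fin k) :
      S ≤ W.comap (LinearMap.funLeft ℂ ℂ fun ab : A₂ × B₂ => (ab.1, ab.2, ℓ)) :=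
    Submodule.span_le.2 <| Set.range_subset_iff.2 fun ab =>
      boxTensor_le_comap_right ab.1 ab.2 (hΨ ℓ)
  have hsep (t : Fin T) : IsSep (partialTraceB (P *ᵥ z t)) :=
    hW.isSep_partialTraceB _ fun ℓ => hSW ℓ <| show P *ᵥ z t ∈ S by
      rw [LinearMap.toMatrix'_mulVec]
      exact Submodule.projection_apply_mem hS' _
  rw [TrB_eq_partialTraceB, partialTraceB_eq_sum_of_partialTraceB_regroup Ψ x _
    (partialTraceB_eq_sum_ketBra_mulVec hPΦ hxz)]
  exact IsSep.sum _ fun t _ => (hsep t).ketBra_kronecker (x t)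

end BoxTensor

section PiBoxTensor

variable {r : ℕ}

def piBoxTensor {A B : Fin r → Type*} (V : ∀ j, Submodule ℂ (A j × B j → ℂ)) :
    Submodule ℂ ((∀ j, A j) × (∀ j, B j) → ℂ) :=
  Submodule.span ℂ
    {u | ∃ v : ∀ j, A j × B j → ℂ, (∀ j, v j ∈ V j) ∧ u = fun p => ∏ j, v j (p.1 j, p.2 j)}

lemma piBoxTensor_le_comap_boxTensor {A B : Fin (r + 1) → Type*}
    (V : ∀ j, Submodule ℂ (A j × B j → ℂ)) :
    piBoxTensor V ≤ (boxTensor (V 0) (piBoxTensor fun j => V j.succ)).comap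
      (LinearMap.funLeft ℂ ℂ (Prod.map (Fin.consEquiv A) (Fin.consEquiv B))) := by
  refine Submodule.span_le.2 ?_
  rintro _ ⟨v, hv, rfl⟩
  refine Submodule.subset_span ⟨v 0, hv 0, fun q => ∏ j, v j.succ (q.1 j, q.2 j),
    Submodule.subset_span ⟨_, fun j => hv j.succ, rfl⟩, ?_⟩
  funext ⟨⟨a, as⟩, b, bs⟩
  simp [Fin.prod_univ_succ]

theorem IsEBSpace.piBoxTensor {A B : Fin r → Type*} [∀ j, Fintype (A j)] [∀ j, Fintype (B j)]
    {V : ∀ j, Submodule ℂ (A j × B j → ℂ)} (hV : ∀ j, IsEBSpace (V j)) :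
    IsEBSpace (piBoxTensor V) := by
  induction r with
  | zero => exact IsEBSpace.of_unique _
  | succ r ih =>
    exact (((hV 0).boxTensor (ih fun j => hV j.succ)).comap_prodMap
      (Fin.consEquiv A) (Fin.consEquiv B)).mono (piBoxTensor_le_comap_boxTensor V)

end PiBoxTensor

/-- The tensor product of finitely many EB spaces (A-systems grouped, B-systems grouped)
is EB. -/
theorem eb_tensor_many {r : ℕ} (m n : Fin r → ℕ)
    (V : ∀ j : Fin r, Submodule ℂ (Fin (m j) × Fin (n j) → ℂ))
    (hV : ∀ j, IsEBSpace (V j)) :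
    IsEBSpace (Submodule.span ℂ
      {u : ((j : Fin r) → Fin (m j)) × ((j : Fin r) → Fin (n j)) → ℂ |
        ∃ v : (j : Fin r) → (Fin (m j) × Fin (n j) → ℂ),
          (∀ j, v j ∈ V j) ∧ u = fun p => ∏ j : Fin r, v j (p.1 j, p.2 j)}) :=
  IsEBSpace.piBoxTensor hV
end
end
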